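/- arXiv:2405.18656 — 4 statements merged into one kernel-verified Lean document; each statement's English description precedes it below -/
import Mathlib

section
/- Let p be a monic polynomial with integer coefficients satisfying |p(0)| = 1. If p has exactly one root α (counted as a complex number) of odd multiplicity, then α = 1 or α = -1. -/
/-!
The multiplicity of a root `β` of `p` depends only on the minimal polynomial of `β` over `ℚ`:
if `(minpoly ℚ β) ^ k` exactly divides `p`, every conjugate of `β` is a root of multiplicity
`k`, because a separable irreducible polynomial has simple roots. So all conjugates of `α` have
odd multiplicity and must equal `α`; by separability `α` is rational, hence an integer root of
the monic `p`, and it divides `p(0) = ±1`.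
-/

open Polynomial

theorem Polynomial.rootMultiplicity_pow {R : Type*} [CommRing R] [IsDomain R] (p : R[X])
    (a : R) (k : ℕ) : rootMultiplicity a (p ^ k) = k * rootMultiplicity a p := by
  classical
  rw [← count_roots, ← count_roots, roots_pow, Multiset.count_nsmul]

section Conjugates

variable {K L : Type*} [Field K] [Field L] [Algebra K L] {x : L}

theorem IsSeparable.rootMultiplicity_map_minpoly (hx : IsSeparable K x) {y : L}
    (hy : aeval y (minpoly K x) = 0) :
    rootMultiplicity y ((minpoly K x).map (algebraMap K L)) = 1 := by
  have hpos : 0 < rootMultiplicity y ((minpoly K x).map (algebraMap K L)) := by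
    rw [rootMultiplicity_pos ((minpoly.monic hx.isIntegral).map _).ne_zero, IsRoot, eval_map,
      ← aeval_def, hy]
  have := rootMultiplicity_le_one_of_separable (Separable.map (f := algebraMap K L) hx) y
  omega

theorem IsSeparable.rootMultiplicity_map_of_eq_minpoly_pow_mul (hx : IsSeparable K x)
    {q r : K[X]} {k : ℕ} (hq : q ≠ 0) (hqr : q = minpoly K x ^ k * r)
    (hr : ¬ minpoly K x ∣ r) {y : L} (hy : aeval y (minpoly K x) = 0) :
    rootMultiplicity y (q.map (algebraMap K L)) = k := by
  have hmin : minpoly K y = minpoly K x :=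
    (minpoly.eq_of_irreducible_of_monic (minpoly.irreducible hx.isIntegral) hy
      (minpoly.monic hx.isIntegral)).symm
  have hry : rootMultiplicity y (r.map (algebraMap K L)) = 0 := by
    refine rootMultiplicity_eq_zero fun hroot ↦ hr (hmin ▸ minpoly.dvd K y ?_)
    rwa [IsRoot, eval_map, ← aeval_def] at hroot
  have hq' : q.map (algebraMap K L) ≠ 0 := Polynomial.map_ne_zero hq
  rw [hqr, Polynomial.map_mul, Polynomial.map_pow] at hq' ⊢
  rw [rootMultiplicity_mul hq', rootMultiplicity_pow, hx.rootMultiplicity_map_minpoly hy, hry,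
    mul_one, add_zero]

theorem IsSeparable.rootMultiplicity_map_eq (hx : IsSeparable K x) {q : K[X]} (hq : q ≠ 0)
    {y : L} (hy : aeval y (minpoly K x) = 0) :
    rootMultiplicity y (q.map (algebraMap K L)) = rootMultiplicity x (q.map (algebraMap K L)) := by
  obtain ⟨k, r, hr, hqr⟩ := WfDvdMonoid.max_power_factor hq (minpoly.irreducible hx.isIntegral)
  rw [hx.rootMultiplicity_map_of_eq_minpoly_pow_mul hq hqr hr hy,
    hx.rootMultiplicity_map_of_eq_minpoly_pow_mul hq hqr hr (minpoly.aeval K x)]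

theorem IsSeparable.mem_range_of_forall_aeval_minpoly_eq_zero [IsAlgClosed L]
    (hx : IsSeparable K x) (h : ∀ y : L, aeval y (minpoly K x) = 0 → y = x) :
    x ∈ (algebraMap K L).range := by
  classical
  set roots := ((minpoly K x).map (algebraMap K L)).roots
  have hcard : Multiset.card roots = (minpoly K x).natDegree :=
    IsAlgClosed.card_roots_map_eq_natDegree_of_injective _ (algebraMap K L).injective
  have hcount : roots.count x = Multiset.card roots := Multiset.count_eq_card.mpr fun y hy ↦
    (h y (by rwa [mem_roots_map_of_injective (algebraMap K L).injective
      (minpoly.ne_zero hx.isIntegral), ← aeval_def] at hy)).symm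
  have hsimple : roots.count x ≤ 1 := count_roots_le_one (Separable.map hx) x
  have hpos := minpoly.natDegree_pos hx.isIntegral
  exact minpoly.natDegree_eq_one_iff.mp (by omega)

end Conjugates

theorem Polynomial.eq_one_or_eq_neg_one_of_aeval_eq_zero {p : ℤ[X]} (hp : p.Monic)
    (h0 : IsUnit (p.coeff 0)) {c : ℚ} (hc : aeval c p = 0) : c = 1 ∨ c = -1 := by
  obtain ⟨n, rfl, hn⟩ := exists_integer_of_is_root_of_monic hp hc
  rcases Int.isUnit_iff.mp (isUnit_of_dvd_unit hn h0) with rfl | rfl <;> simp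

/-- Let `p` be a monic polynomial with integer coefficients satisfying `|p(0)| = 1`.
If `p` has exactly one complex root `α` of odd multiplicity, then `α = 1` or `α = -1`. -/
theorem stmt0 (p : Polynomial ℤ) (hmonic : p.Monic) (h0 : |p.coeff 0| = 1) (α : ℂ)
    (hα : ∀ z : ℂ, Odd ((p.map (Int.castRingHom ℂ)).rootMultiplicity z) ↔ z = α) :
    α = 1 ∨ α = -1 := by
  have hP : p.map (Int.castRingHom ℂ) = (p.map (algebraMap ℤ ℚ)).map (algebraMap ℚ ℂ) := by
    rw [Polynomial.map_map, ← IsScalarTower.algebraMap_eq, algebraMap_int_eq]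
  have hroot : aeval α p = 0 := by
    have := ((hα α).mpr rfl).pos
    rwa [rootMultiplicity_pos (hmonic.map _).ne_zero, IsRoot, ← eval₂_eq_eval_map,
      ← algebraMap_int_eq, ← aeval_def] at this
  have hint : IsIntegral ℚ α := IsIntegral.tower_top ⟨p, hmonic, hroot⟩
  have hsep : IsSeparable ℚ α := (minpoly.irreducible hint).separable
  have hconj : ∀ y : ℂ, aeval y (minpoly ℚ α) = 0 → y = α := fun y hy ↦
    (hα y).mp <| by
      rw [hP, hsep.rootMultiplicity_map_eq (hmonic.map _).ne_zero hy, ← hP]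
      exact (hα α).mpr rfl
  obtain ⟨c, rfl⟩ := hsep.mem_range_of_forall_aeval_minpoly_eq_zero hconj
  have hc : aeval c p = 0 := by
    rwa [aeval_algebraMap_apply, map_eq_zero_iff _ (algebraMap ℚ ℂ).injective] at hroot
  rcases eq_one_or_eq_neg_one_of_aeval_eq_zero hmonic (Int.isUnit_iff_abs_eq.mpr h0) hc
    with rfl | rfl <;> simp
end

section
/- Let p be a monic polynomial with integer coefficients satisfying |p(0)| = 1. If α and its conjugate ᾱ ≠ α are the only roots of p with odd multiplicity, then |α| = 1. -/
/-!
Since `α` is an algebraic integer, `p = μ ^ k * r` over `ℚ` with `μ` the minimal polynomial of `α`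
and `μ ∤ r`. As `μ` is separable, every complex root of `μ` is a root of `p` of multiplicity
exactly `k`; this `k` is odd because `α` is such a root, so the roots of `μ` lie among the
odd-multiplicity roots `α, ᾱ` and `μ = (X - α)(X - ᾱ)`. Hence `|α|² = μ(0)`, which is `±1`
because the integral minimal polynomial of `α` divides `p` in `ℤ[X]` and `p(0) = ±1`.
-/

open Polynomial

section RootMultiplicity

variable {K L : Type*} [Field K] [PerfectField K] [Field L] [Algebra K L]

theorem rootMultiplicity_map_eq_multiplicity_minpoly {p : K[X]} (hp : p ≠ 0) {y : L}
    (hy : IsIntegral K y) :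
    (p.map (algebraMap K L)).rootMultiplicity y = multiplicity (minpoly K y) p := by
  set μ := (minpoly K y).map (algebraMap K L)
  obtain ⟨r, hpr, hndvd⟩ := (finiteMultiplicity_of_degree_pos_of_monic (minpoly.degree_pos hy)
    (minpoly.monic hy) hp).exists_eq_pow_mul_and_not_dvd
  have hμ : μ.rootMultiplicity y = 1 := by
    have hsep : μ.Separable := (PerfectField.separable_of_irreducible (minpoly.irreducible hy)).map
    have hroot : 0 < μ.rootMultiplicity y :=
      (rootMultiplicity_pos ((minpoly.monic hy).map _).ne_zero).2 <| by
        rw [IsRoot, eval_map, ← aeval_def, minpoly.aeval]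
    exact le_antisymm (rootMultiplicity_le_one_of_separable hsep y) hroot
  have hμpow (k : ℕ) : (μ ^ k).rootMultiplicity y = k := by
    classical
    rw [← count_roots, roots_pow, Multiset.count_nsmul, count_roots, hμ, mul_one]
  have hr : ¬ (r.map (algebraMap K L)).IsRoot y := fun h =>
    hndvd (minpoly.dvd K y (by rwa [aeval_def, ← eval_map]))
  have hpL :
      p.map (algebraMap K L) = μ ^ multiplicity (minpoly K y) p * r.map (algebraMap K L) := by
    conv_lhs => rw [hpr, Polynomial.map_mul, Polynomial.map_pow]
  rw [hpL, rootMultiplicity_mul (hpL ▸ (Polynomial.map_ne_zero hp)), hμpow,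
    rootMultiplicity_eq_zero hr, add_zero]

theorem rootMultiplicity_map_eq_of_aeval_minpoly_eq_zero {p : K[X]} (hp : p ≠ 0) {x y : L}
    (hx : IsIntegral K x) (hy : aeval y (minpoly K x) = 0) :
    (p.map (algebraMap K L)).rootMultiplicity y = (p.map (algebraMap K L)).rootMultiplicity x := by
  have hxy : minpoly K x = minpoly K y :=
    minpoly.eq_of_irreducible_of_monic (minpoly.irreducible hx) hy (minpoly.monic hx)
  rw [rootMultiplicity_map_eq_multiplicity_minpoly hp hx,
    rootMultiplicity_map_eq_multiplicity_minpoly hp ⟨minpoly K x, minpoly.monic hx, hy⟩, hxy]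

end RootMultiplicity

theorem Polynomial.eq_X_sub_C_mul_X_sub_C_of_isRoot_iff {F : Type*} [Field F] [IsAlgClosed F]
    {f : F[X]} (hf : f.Monic) (hsep : f.Separable) {a b : F} (hab : a ≠ b)
    (hroots : ∀ z, f.IsRoot z ↔ z = a ∨ z = b) :
    f = (X - C a) * (X - C b) := by
  have hf0 : f ≠ 0 := hf.ne_zero
  have hrootsab : f.roots = {a, b} := by
    refine (Multiset.Nodup.ext (nodup_roots hsep) (by simpa using hab)).2 fun z => ?_
    rw [mem_roots hf0, hroots]
    simp
  rw [(IsAlgClosed.splits f).eq_prod_roots_of_monic hf, hrootsab]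
  simp

theorem isUnit_coeff_zero_minpoly {R S : Type*} [CommRing R] [IsDomain R] [IsIntegrallyClosed R]
    [CommRing S] [IsDomain S] [Algebra R S] [Module.IsTorsionFree R S] {s : S}
    (hs : IsIntegral R s) {p : R[X]} (hp : aeval s p = 0) (hp0 : IsUnit (p.coeff 0)) :
    IsUnit ((minpoly R s).coeff 0) := by
  have hdvd := map_dvd constantCoeff (minpoly.isIntegrallyClosed_dvd hs hp)
  exact isUnit_of_dvd_unit hdvd hp0

theorem Complex.norm_eq_one_of_minpoly_map_eq {α : ℂ} (hα : IsIntegral ℤ α)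
    (hunit : IsUnit ((minpoly ℤ α).coeff 0))
    (hμ : (minpoly ℚ α).map (algebraMap ℚ ℂ) = (X - C α) * (X - C (starRingEnd ℂ α))) :
    ‖α‖ = 1 := by
  have hμ0 : (((minpoly ℤ α).coeff 0 : ℤ) : ℂ) = ((‖α‖ ^ 2 : ℝ) : ℂ) := by
    have := congrArg (coeff · 0) hμ
    simp only [minpoly.isIntegrallyClosed_eq_field_fractions' ℚ hα, map_map, coeff_map,
      eq_intCast, mul_coeff_zero, coeff_sub, coeff_X_zero, coeff_C_zero] at this
    rw [Complex.ofReal_pow, ← Complex.mul_conj', this]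
    ring
  have hnorm : (((minpoly ℤ α).coeff 0 : ℤ) : ℝ) = ‖α‖ ^ 2 := by exact_mod_cast hμ0
  refine (pow_eq_one_iff_of_nonneg (norm_nonneg α) two_ne_zero).1 ?_
  rcases Int.isUnit_iff.1 hunit with h | h <;> push_cast [h] at hnorm
  · exact hnorm.symm
  · nlinarith [sq_nonneg ‖α‖]

/-- Let `p` be a monic integer polynomial with `|p(0)| = 1`. If `α` and its conjugate
`ᾱ ≠ α` are the only complex roots of `p` with odd multiplicity, then `|α| = 1`. -/
theorem stmt1 (p : Polynomial ℤ) (hmonic : p.Monic) (h0 : |p.coeff 0| = 1) (α : ℂ)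
    (hconj : starRingEnd ℂ α ≠ α)
    (hα : ∀ z : ℂ, Odd ((p.map (Int.castRingHom ℂ)).rootMultiplicity z) ↔
      (z = α ∨ z = starRingEnd ℂ α)) :
    ‖α‖ = 1 := by
  have hpQ : p.map (Int.castRingHom ℂ) = (p.map (algebraMap ℤ ℚ)).map (algebraMap ℚ ℂ) := by
    rw [Polynomial.map_map, RingHom.ext_int (Int.castRingHom ℂ)]
  have hpα : aeval α p = 0 := by
    have hroot := ((hα α).2 (Or.inl rfl)).pos
    rwa [rootMultiplicity_pos (hmonic.map _).ne_zero, IsRoot, eval_map, ← algebraMap_int_eq,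
      ← aeval_def] at hroot
  have hint : IsIntegral ℤ α := ⟨p, hmonic, by rwa [← aeval_def]⟩
  have hroots (z : ℂ) :
      ((minpoly ℚ α).map (algebraMap ℚ ℂ)).IsRoot z ↔ z = α ∨ z = starRingEnd ℂ α := by
    rw [IsRoot, eval_map, ← aeval_def]
    refine ⟨fun hz => (hα z).1 ?_, ?_⟩
    · rw [hpQ, rootMultiplicity_map_eq_of_aeval_minpoly_eq_zero (hmonic.map _).ne_zero
        hint.tower_top hz, ← hpQ]
      exact (hα α).2 (Or.inl rfl)
    · rintro (rfl | rfl)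
      exacts [minpoly.aeval ℚ z, minpoly.aeval_algHom ℚ (starRingEnd ℂ).toRatAlgHom α]
  refine Complex.norm_eq_one_of_minpoly_map_eq hint
    (isUnit_coeff_zero_minpoly hint hpα (Int.isUnit_iff_abs_eq.2 h0)) ?_
  exact eq_X_sub_C_mul_X_sub_C_of_isRoot_iff ((minpoly.monic hint.tower_top).map _)
    (PerfectField.separable_of_irreducible (minpoly.irreducible hint.tower_top)).map
    hconj.symm hroots
end

section
/- Let p(x) = xⁿ + Σ_{j=1}^{n-1} (-1)^j m_{n-j} x^{n-j} + (-1)ⁿ be a monic integer polynomial of degree n ≥ 2 with all m_j > 0, and set m_0 = m_n = 1. If m_j² - 4 m_{j-1} m_{j+1} > 0 for all j = 1, …, n-1, then p has n distinct positive real roots. -/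
/-!
Put `q(x) = ∑ m_j x^j`, so that `p(x) = (-1)ⁿ q(-x)`. At the test points `x₀ = 0` and
`x_k = 2 m_{k-1} / m_k`, Kurtz's condition makes the terms `t_j = m_j x_k^j` of `q(-x_k)` at least
double up to the index `k` (with `t_{k-1} = t_k / 2` exactly) and more than halve after it.
Bounding the two alternating sums on either side of the peak `t_k` by their first terms shows that
`q(-x_k)` has the sign `(-1)^k`. The `x_k` increase, so the intermediate value theorem gives a root
of `p` in each of the `n` intervals `(x_{k-1}, x_k)`, and these are all the roots of `p`.
-/

open Polynomial Finset

theorem neg_one_pow_sq {R : Type*} [Monoid R] [HasDistribNeg R] (k : ℕ) :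
    ((-1 : R) ^ k) ^ 2 = 1 := by
  rw [← pow_mul, pow_mul', neg_one_sq, one_pow]

section AlternatingSums

variable {R : Type*} [CommRing R] [LinearOrder R] [IsStrictOrderedRing R]

theorem alternating_sum_mem_Icc_of_antitone {c : ℕ → R} {r : ℕ}
    (hc : ∀ i < r, c (i + 1) ≤ c i) (hr : 0 ≤ c r) :
    ∑ i ∈ range (r + 1), (-1) ^ i * c i ∈ Set.Icc 0 (c 0) := by
  induction r generalizing c with
  | zero => simpa using hr
  | succ r ih =>
    obtain ⟨hlo, hhi⟩ := ih (c := fun i => c (i + 1)) (fun i hi => hc (i + 1) (by omega)) hr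
    have h01 := hc 0 (by omega)
    rw [sum_range_succ']
    simp only [pow_succ, mul_neg_one, neg_mul, sum_neg_distrib, pow_zero, one_mul] at hlo hhi ⊢
    constructor <;> linarith

theorem neg_one_pow_mul_alternating_sum_mem_Icc_of_monotone {t : ℕ → R} {k : ℕ}
    (h0 : 0 ≤ t 0) (ht : ∀ j < k, t j ≤ t (j + 1)) :
    (-1) ^ k * ∑ j ∈ range (k + 1), (-1) ^ j * t j ∈ Set.Icc 0 (t k) := by
  induction k with
  | zero => simpa using h0
  | succ k ih =>
    obtain ⟨hlo, hhi⟩ := ih fun j hj => ht j (by omega)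
    have hk := ht k (by omega)
    have : (-1) ^ (k + 1) * ∑ j ∈ range (k + 1 + 1), (-1) ^ j * t j
        = t (k + 1) - (-1) ^ k * ∑ j ∈ range (k + 1), (-1) ^ j * t j := by
      rw [sum_range_succ]; linear_combination t (k + 1) * neg_one_pow_sq (R := R) k
    rw [this]
    constructor <;> linarith

theorem neg_one_pow_mul_alternating_sum_pos_of_peak {t : ℕ → R} {k N : ℕ} (hkN : k < N)
    (ht : ∀ j ≤ N, 0 < t j) (hup : ∀ j ≤ k, 2 * t j ≤ t (j + 1))
    (hdown : ∀ j, k < j → j < N → 2 * t (j + 1) < t j) :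
    0 < (-1) ^ (k + 1) * ∑ j ∈ range (N + 1), (-1) ^ j * t j := by
  obtain ⟨r, rfl⟩ : ∃ r, N = k + 1 + r := ⟨N - (k + 1), by omega⟩
  obtain ⟨-, hhead⟩ :=
    neg_one_pow_mul_alternating_sum_mem_Icc_of_monotone (t := t) (ht 0 (by omega)).le
    fun j hj => by linarith [hup j hj.le, ht j (by omega)]
  have hpeak := hup k le_rfl
  have htail : 2 * ∑ i ∈ range r, (-1) ^ i * t (k + 2 + i) < t (k + 1) := by
    cases r with
    | zero => simpa using ht (k + 1) (by omega)
    | succ r =>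
      obtain ⟨-, h⟩ :=
        alternating_sum_mem_Icc_of_antitone (c := fun i => t (k + 2 + i)) (r := r)
        (fun i hi => by
          have := hdown (k + 2 + i) (by omega) (by omega)
          rw [← add_assoc]
          linarith [ht (k + 2 + i + 1) (by omega)])
        (ht _ (by omega)).le
      linarith [hdown (k + 1) (by omega) (by omega)]
  have hsplit : (-1) ^ (k + 1) * ∑ j ∈ range (k + 1 + r + 1), (-1) ^ j * t j
      = t (k + 1) - (-1) ^ k * ∑ j ∈ range (k + 1), (-1) ^ j * t j
        - ∑ i ∈ range r, (-1) ^ i * t (k + 2 + i) := by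
    rw [show k + 1 + r + 1 = k + 2 + r by omega, sum_range_add, sum_range_succ]
    simp only [pow_add, mul_assoc, ← mul_sum]
    linear_combination
      (t (k + 1) - ∑ i ∈ range r, (-1) ^ i * t (k + 2 + i)) * neg_one_pow_sq (R := R) k
  rw [hsplit]
  linarith

end AlternatingSums

noncomputable def kurtzPoint (a : ℕ → ℝ) : ℕ → ℝ
  | 0 => 0
  | k + 1 => 2 * a k / a (k + 1)

section Kurtz

variable {a : ℕ → ℝ} {n : ℕ} (ha : ∀ j ≤ n, 0 < a j)
include ha

theorem kurtzPoint_pos {k : ℕ} (hk : k ≤ n) (hk0 : k ≠ 0) : 0 < kurtzPoint a k := by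
  obtain ⟨k, rfl⟩ := Nat.exists_eq_succ_of_ne_zero hk0
  exact div_pos (mul_pos two_pos (ha k (by omega))) (ha (k + 1) hk)

variable (hkurtz : ∀ j, j + 2 ≤ n → 4 * a j * a (j + 2) < a (j + 1) ^ 2)
include hkurtz

theorem four_mul_kurtzPoint_lt {k : ℕ} (hk : k + 2 ≤ n) :
    4 * kurtzPoint a (k + 1) < kurtzPoint a (k + 2) := by
  have h0 := ha k (by omega)
  have h1 := ha (k + 1) (by omega)
  have h2 := ha (k + 2) hk
  simp only [kurtzPoint]
  rw [← mul_div_assoc, div_lt_div_iff₀ h1 h2]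
  nlinarith [hkurtz k hk]

theorem kurtzPoint_lt_succ {k : ℕ} (hk : k < n) : kurtzPoint a k < kurtzPoint a (k + 1) := by
  have hpos := kurtzPoint_pos ha (k := k + 1) hk (by omega)
  cases k with
  | zero => exact hpos
  | succ k =>
    have := kurtzPoint_pos ha (k := k + 1) (by omega) (by omega)
    linarith [four_mul_kurtzPoint_lt ha hkurtz hk]

theorem kurtzPoint_strictMonoOn : StrictMonoOn (kurtzPoint a) (Set.Iic n) :=
  strictMonoOn_Iic_of_lt_succ fun _ hk => kurtzPoint_lt_succ ha hkurtz hk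

theorem neg_one_pow_mul_sum_eval_kurtzPoint_pos {k : ℕ} (hk : k ≤ n) :
    0 < (-1) ^ k * ∑ j ∈ range (n + 1), a j * (-kurtzPoint a k) ^ j := by
  cases k with
  | zero => simpa [kurtzPoint, sum_range_succ'] using ha 0 (Nat.zero_le n)
  | succ k =>
  set s := kurtzPoint a (k + 1)
  have hs : 0 < s := kurtzPoint_pos ha hk (by omega)
  set t : ℕ → ℝ := fun j => a j * s ^ j
  have ht : ∀ j ≤ n, 0 < t j := fun j hj => mul_pos (ha j hj) (pow_pos hs j)
  have hratio : ∀ j < n, t (j + 1) * kurtzPoint a (j + 1) = 2 * s * t j := fun j hj => by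
    have := (ha (j + 1) hj).ne'
    simp only [t, kurtzPoint]
    field_simp
    ring
  have hmono := (kurtzPoint_strictMonoOn ha hkurtz).monotoneOn
  have hsum : ∑ j ∈ range (n + 1), a j * (-s) ^ j = ∑ j ∈ range (n + 1), (-1) ^ j * t j :=
    sum_congr rfl fun j _ => by rw [neg_pow]; ring
  rw [hsum]
  refine neg_one_pow_mul_alternating_sum_pos_of_peak (by omega) ht (fun j hj => ?_)
    (fun j hkj hj => ?_)
  · have hx : kurtzPoint a (j + 1) ≤ s :=
      hmono (Set.mem_Iic.2 (by omega)) (Set.mem_Iic.2 hk) (by omega)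
    refine le_of_mul_le_mul_right ?_ hs
    calc 2 * t j * s = t (j + 1) * kurtzPoint a (j + 1) := by rw [hratio j (by omega)]; ring
      _ ≤ t (j + 1) * s := by gcongr; exact (ht _ (by omega)).le
  · have hx : 4 * s < kurtzPoint a (j + 1) :=
      (four_mul_kurtzPoint_lt ha hkurtz (by omega)).trans_le
      (hmono (Set.mem_Iic.2 (by omega)) (Set.mem_Iic.2 (by omega)) (by omega))
    refine lt_of_mul_lt_mul_right ?_ (by positivity : 0 ≤ 2 * s)
    calc 2 * t (j + 1) * (2 * s) = t (j + 1) * (4 * s) := by ring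
      _ < t (j + 1) * kurtzPoint a (j + 1) := by gcongr; exact ht _ (by omega)
      _ = t j * (2 * s) := by rw [hratio j hj]; ring

end Kurtz

theorem exists_mem_Ioo_eq_zero_of_mul_neg {f : ℝ → ℝ} {x y : ℝ}
    (hf : ContinuousOn f (Set.Icc x y)) (hxy : x ≤ y) (h : f x * f y < 0) :
    ∃ r ∈ Set.Ioo x y, f r = 0 := by
  rcases mul_neg_iff.1 h with ⟨hx, hy⟩ | ⟨hx, hy⟩
  · exact intermediate_value_Ioo' hxy hf ⟨hy, hx⟩
  · exact intermediate_value_Ioo hxy hf ⟨hx, hy⟩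

theorem strictMono_of_mem_Ioo_castSucc_succ {n : ℕ} {x : Fin (n + 1) → ℝ} (hx : StrictMono x)
    {r : Fin n → ℝ} (hr : ∀ i, r i ∈ Set.Ioo (x i.castSucc) (x i.succ)) : StrictMono r :=
  fun i j hij => calc
    r i < x i.succ := (hr i).2
    _ ≤ x j.castSucc := hx.monotone (Fin.succ_le_castSucc_iff.2 hij)
    _ < r j := (hr j).1

theorem Polynomial.Monic.eq_prod_X_sub_C_of_injective {R : Type*} [CommRing R] [IsDomain R]
    {P : R[X]} {n : ℕ} (hP : P.Monic) (hdeg : P.natDegree = n) {r : Fin n → R}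
    (hr : Function.Injective r) (hroot : ∀ i, P.IsRoot (r i)) :
    P = ∏ i, (X - C (r i)) := by
  classical
  have hroots : P.roots = (univ.image r).val :=
    roots_eq_of_natDegree_le_card_of_ne_zero (by simpa using hroot)
      (by rw [card_image_of_injective _ hr, card_fin, hdeg]) hP.ne_zero
  have hcard : Multiset.card P.roots = P.natDegree := by
    rw [hroots, card_val, card_image_of_injective _ hr, card_fin, hdeg]
  rw [← prod_multiset_X_sub_C_of_monic_of_roots_card_eq hP hcard, hroots,
    ← Finset.prod_eq_multiset_prod, prod_image hr.injOn]

theorem exists_strictMono_roots_of_sign_changes {P : ℝ[X]} {n : ℕ} (hP : P.Monic)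
    (hdeg : P.natDegree = n) {x : Fin (n + 1) → ℝ} (hx : StrictMono x)
    (hsign : ∀ i : Fin n, P.eval (x i.castSucc) * P.eval (x i.succ) < 0) :
    ∃ r : Fin n → ℝ, StrictMono r ∧ (∀ i, r i ∈ Set.Ioo (x i.castSucc) (x i.succ)) ∧
      P = ∏ i, (X - C (r i)) := by
  choose r hr hroot using fun i =>
    exists_mem_Ioo_eq_zero_of_mul_neg P.continuous.continuousOn
      (hx (Fin.castSucc_lt_succ (i := i))).le (hsign i)
  have hmono := strictMono_of_mem_Ioo_castSucc_succ hx hr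
  exact ⟨r, hmono, hr, hP.eq_prod_X_sub_C_of_injective hdeg hmono.injective hroot⟩

theorem degree_sum_Icc_add_C_lt (m : ℕ → ℤ) {n : ℕ} (hn : 1 ≤ n) (c : ℤ) :
    (∑ j ∈ Icc 1 (n - 1), C ((-1) ^ j * m (n - j)) * X ^ (n - j) + C c).degree < n := by
  refine (degree_add_le _ _).trans_lt (max_lt ?_ ((degree_C_le).trans_lt (by exact_mod_cast hn)))
  refine (degree_sum_le _ _).trans_lt ((Finset.sup_lt_iff (WithBot.bot_lt_coe n)).2 fun j hj => ?_)
  simp only [mem_Icc] at hj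
  exact (degree_C_mul_X_pow_le _ _).trans_lt (WithBot.coe_lt_coe.2 (show n - j < n by omega))

theorem eval_map_eq_neg_one_pow_mul_sum (m : ℕ → ℤ) {n : ℕ} (hn : 1 ≤ n) (h0 : m 0 = 1)
    (hnn : m n = 1) (x : ℝ) :
    ((X ^ n + (∑ j ∈ Icc 1 (n - 1), C ((-1) ^ j * m (n - j)) * X ^ (n - j)) + C ((-1) ^ n)
      : ℤ[X]).map (Int.castRingHom ℝ)).eval x =
      (-1) ^ n * ∑ j ∈ range (n + 1), (m j : ℝ) * (-x) ^ j := by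
  set g : ℕ → ℝ := fun j => (-1) ^ j * m (n - j) * x ^ (n - j)
  have hreflect : (-1) ^ n * ∑ j ∈ range (n + 1), (m j : ℝ) * (-x) ^ j =
      ∑ j ∈ range (n + 1), g j := by
    rw [mul_sum, ← sum_range_reflect]
    refine sum_congr rfl fun j hj => ?_
    obtain ⟨d, rfl⟩ : ∃ d, n = j + d := ⟨n - j, by simp at hj; omega⟩
    simp only [g, show j + d + 1 - 1 - j = d by omega, show j + d - j = d by omega]
    rw [neg_pow x]
    linear_combination (-1) ^ j * (m d : ℝ) * x ^ d * neg_one_pow_sq (R := ℝ) d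
  obtain ⟨k, rfl⟩ : ∃ k, n = k + 1 := ⟨n - 1, by omega⟩
  rw [hreflect, sum_range_succ, sum_range_succ', ← Ico_add_one_right_eq_Icc, sum_Ico_eq_sum_range]
  simp [g, h0, hnn, add_comm, Polynomial.map_sum, eval_finsetSum]

theorem mul_neg_of_neg_one_pow_mul_pos {R : Type*} [CommRing R] [LinearOrder R]
    [IsStrictOrderedRing R] {u v : R} (k : ℕ) (hu : 0 < (-1) ^ k * u)
    (hv : 0 < (-1) ^ (k + 1) * v) : u * v < 0 := by
  have : u * v = -(((-1) ^ k * u) * ((-1) ^ (k + 1) * v)) := by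
    rw [pow_succ]; linear_combination -(u * v) * neg_one_pow_sq (R := R) k
  rw [this]
  exact neg_neg_of_pos (mul_pos hu hv)

/-- Kurtz-type criterion: let `p(x) = xⁿ + Σ_{j=1}^{n-1} (-1)^j m_{n-j} x^{n-j} + (-1)ⁿ`
be a monic integer polynomial of degree `n ≥ 2` with all `m_j > 0`, and set `m_0 = m_n = 1`.
If `m_j² - 4 m_{j-1} m_{j+1} > 0` for all `j = 1,…,n-1`, then `p` has `n` distinct positive
real roots. -/
theorem stmt7 (n : ℕ) (hn : 2 ≤ n) (m : ℕ → ℤ) (h0 : m 0 = 1) (hnn : m n = 1)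
    (hpos : ∀ j, 1 ≤ j → j ≤ n - 1 → 0 < m j)
    (hkurtz : ∀ j, 1 ≤ j → j ≤ n - 1 → 0 < (m j) ^ 2 - 4 * m (j - 1) * m (j + 1))
    (p : Polynomial ℤ)
    (hp : p = X ^ n + (∑ j ∈ Finset.Icc 1 (n - 1), C ((-1) ^ j * m (n - j)) * X ^ (n - j))
      + C ((-1) ^ n)) :
    ∃ r : Fin n → ℝ, Function.Injective r ∧ (∀ i, 0 < r i) ∧
      p.map (Int.castRingHom ℝ) = ∏ i, (X - C (r i)) := by
  have hm : ∀ j ≤ n, 0 < m j := fun j hj => by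
    rcases Nat.eq_zero_or_pos j with rfl | hj0
    · simp [h0]
    rcases hj.lt_or_eq with hjn | rfl
    · exact hpos j hj0 (by omega)
    · simp [hnn]
  have ha : ∀ j ≤ n, (0 : ℝ) < m j := fun j hj => Int.cast_pos.2 (hm j hj)
  have hka : ∀ j, j + 2 ≤ n → 4 * (m j : ℝ) * m (j + 2) < (m (j + 1) : ℝ) ^ 2 :=
    fun j hj => by
      have := hkurtz (j + 1) (by omega) (by omega)
      simp only [Nat.add_sub_cancel] at this
      exact_mod_cast (by linarith : 4 * m j * m (j + 2) < m (j + 1) ^ 2)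
  have hmonic : p.Monic := by
    rw [hp, add_assoc]
    exact monic_X_pow_add (degree_sum_Icc_add_C_lt m (by omega) _)
  have hdeg : p.natDegree = n := by
    rw [hp, add_assoc, natDegree_add_eq_left_of_degree_lt, natDegree_X_pow]
    rw [degree_X_pow]; exact degree_sum_Icc_add_C_lt m (by omega) _
  have heval := eval_map_eq_neg_one_pow_mul_sum m (by omega) h0 hnn
  rw [← hp] at heval
  set x : Fin (n + 1) → ℝ := fun i => kurtzPoint (fun j => (m j : ℝ)) i
  have hx : StrictMono x := Fin.strictMono_iff_lt_succ.2 fun i => kurtzPoint_lt_succ ha hka i.2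
  obtain ⟨r, hr, hrx, hfac⟩ :=
    exists_strictMono_roots_of_sign_changes (hmonic.map (Int.castRingHom ℝ))
    (by rw [hmonic.natDegree_map, hdeg]) hx fun i => by
      rw [heval, heval, show ∀ u v : ℝ, (-1) ^ n * u * ((-1) ^ n * v) = u * v from
        fun u v => by linear_combination u * v * neg_one_pow_sq (R := ℝ) n]
      exact mul_neg_of_neg_one_pow_mul_pos i (neg_one_pow_mul_sum_eval_kurtzPoint_pos ha hka i.2.le)
        (neg_one_pow_mul_sum_eval_kurtzPoint_pos ha hka i.2)
  exact ⟨r, hr.injective, fun i => (hx.monotone (Fin.zero_le _)).trans_lt (hrx i).1, hfac⟩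
end

section
/- Let S be a real d×d matrix and Φ(x) = Σ_{n≥0} xⁿ/(n+1)!. Then Φ(tS) is invertible for all real t if and only if S has no nonzero purely imaginary eigenvalue. -/
/-!
Over `ℂ`, `z Φ(z) = eᶻ - 1`, so `Φ` vanishes exactly on `2πiℤ ∖ {0}`. If `A v = μ v` then
`Φ(A) v = Φ(μ) v`; conversely `A` commutes with `Φ(A)`, so a nonzero kernel of `Φ(A)` is
`A`-invariant and contains an eigenvector of `A`, which is killed by `Φ(μ)`. Hence `Φ(A)` is
invertible iff `Φ` does not vanish on the spectrum of `A`. Applied to the complexification of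
`tS`, `Φ(tS)` is singular for some real `t` iff `tμ ∈ 2πiℤ ∖ {0}` for an eigenvalue `μ` of `S` and
some real `t`, i.e. iff `μ` is a nonzero purely imaginary number.
-/

open scoped Matrix

/-- The matrix power series `Φ(S) = Σ_{n ≥ 0} Sⁿ/(n+1)!`. -/
noncomputable def PhiMat {d : ℕ} (S : Matrix (Fin d) (Fin d) ℝ) : Matrix (Fin d) (Fin d) ℝ :=
  ∑' k : ℕ, (((k + 1).factorial : ℝ))⁻¹ • S ^ k

open scoped Nat

section Phi

variable (𝕂 : Type*) {𝔸 : Type*} [DivisionRing 𝕂] [Ring 𝔸] [Module 𝕂 𝔸] [TopologicalSpace 𝔸]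

noncomputable def phi (a : 𝔸) : 𝔸 := ∑' k : ℕ, ((k + 1)! : 𝕂)⁻¹ • a ^ k

@[simp]
lemma phi_zero [T2Space 𝔸] : phi 𝕂 (0 : 𝔸) = 1 := by
  rw [phi, tsum_eq_single 0 fun k hk => by rw [zero_pow hk, smul_zero]]
  simp

lemma map_phi (𝕂' : Type*) {𝔹 F : Type*} [DivisionRing 𝕂'] [Ring 𝔹] [Module 𝕂' 𝔹]
    [TopologicalSpace 𝔹] [T2Space 𝔹] [FunLike F 𝔸 𝔹] [RingHomClass F 𝔸 𝔹] (f : F)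
    (hf : Continuous f) {a : 𝔸} (ha : Summable fun k : ℕ => ((k + 1)! : 𝕂)⁻¹ • a ^ k) :
    f (phi 𝕂 a) = phi 𝕂' (f a) := by
  rw [phi, ha.map_tsum f hf, phi]
  simp_rw [map_inv_natCast_smul f 𝕂 𝕂', map_pow]

lemma commute_phi {𝕂 𝔸 : Type*} [Field 𝕂] [Ring 𝔸] [Algebra 𝕂 𝔸] [TopologicalSpace 𝔸]
    [IsTopologicalRing 𝔸] [T2Space 𝔸] (a : 𝔸) : Commute a (phi 𝕂 a) :=
  .tsum_right a fun k => ((Commute.refl a).pow_right k).smul_right _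

end Phi

section Normed

variable {𝕂 𝔸 : Type*} [RCLike 𝕂] [NormedRing 𝔸] [NormedAlgebra 𝕂 𝔸]

lemma summable_phi_terms [CompleteSpace 𝔸] (a : 𝔸) :
    Summable fun k : ℕ => ((k + 1)! : 𝕂)⁻¹ • a ^ k := by
  refine .of_norm_bounded (NormedSpace.norm_expSeries_summable' (𝕂 := 𝕂) a) fun k => ?_
  rw [norm_smul, norm_smul, norm_inv, norm_inv, RCLike.norm_natCast, RCLike.norm_natCast]
  gcongr
  exact k.le_succ

lemma mul_phi [CompleteSpace 𝔸] (a : 𝔸) : a * phi 𝕂 a = NormedSpace.exp a - 1 := by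
  rw [congrFun (NormedSpace.exp_eq_tsum 𝕂) a,
    (NormedSpace.expSeries_summable' a).tsum_eq_zero_add, phi,
    ← (summable_phi_terms a).tsum_mul_left]
  simp [← pow_succ']

end Normed

open Complex in
lemma phi_eq_zero_iff {z : ℂ} : phi ℂ z = 0 ↔ ∃ n : ℤ, n ≠ 0 ∧ z = n * (2 * Real.pi * I) := by
  have hexp : z * phi ℂ z = exp z - 1 := by rw [mul_phi, Complex.exp_eq_exp_ℂ]
  constructor
  · intro h
    have hz : z ≠ 0 := by rintro rfl; simp at h
    obtain ⟨n, rfl⟩ := exp_eq_one_iff.mp (by linear_combination -hexp + z * h)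
    exact ⟨n, by rintro rfl; simp at hz, rfl⟩
  · rintro ⟨n, hn, rfl⟩
    rw [exp_eq_one_iff.mpr ⟨n, rfl⟩, sub_self, mul_eq_zero] at hexp
    exact hexp.resolve_left (by simp [hn, Real.pi_ne_zero, I_ne_zero])

open Complex in
lemma exists_phi_ofReal_mul_eq_zero_iff (μ : ℂ) :
    (∃ t : ℝ, phi ℂ (t * μ) = 0) ↔ ∃ a : ℝ, a ≠ 0 ∧ μ = a * I := by
  simp_rw [phi_eq_zero_iff]
  constructor
  · rintro ⟨t, n, hn, htμ⟩
    have ht : (t : ℂ) ≠ 0 := by rintro h; simp [h, hn, Real.pi_ne_zero] at htμ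
    refine ⟨2 * Real.pi * n / t, by simp_all [Real.pi_ne_zero], ?_⟩
    push_cast
    field_simp
    linear_combination htμ
  · rintro ⟨a, ha, rfl⟩
    refine ⟨2 * Real.pi / a, 1, one_ne_zero, ?_⟩
    have ha' : (a : ℂ) ≠ 0 := by exact_mod_cast ha
    push_cast
    field_simp

lemma Module.End.exists_hasEigenvector_mem_ker_of_commute {K V : Type*} [Field K]
    [IsAlgClosed K] [AddCommGroup V] [Module K V] [FiniteDimensional K V] {f g : Module.End K V}
    (hfg : Commute f g) (hg : LinearMap.ker g ≠ ⊥) :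
    ∃ μ v, f.HasEigenvector μ v ∧ g v = 0 := by
  have hmaps : Set.MapsTo f (LinearMap.ker g) (LinearMap.ker g) := fun v hv => by
    rw [SetLike.mem_coe, LinearMap.mem_ker] at hv ⊢
    rw [← Module.End.mul_apply, ← hfg.eq, Module.End.mul_apply, hv, map_zero]
  have : Nontrivial (LinearMap.ker g) := Submodule.nontrivial_iff_ne_bot.mpr hg
  obtain ⟨μ, hμ⟩ := Module.End.exists_eigenvalue (f.restrict hmaps)
  obtain ⟨w, hw⟩ := hμ.exists_hasEigenvector
  refine ⟨μ, w, ⟨?_, fun h => hw.2 (Subtype.ext h)⟩, w.2⟩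
  rw [Module.End.mem_eigenspace_iff]
  exact congrArg Subtype.val hw.apply_eq_smul

namespace Matrix

variable {n : Type*} [Fintype n] [DecidableEq n]

section RCLike

variable {𝕂 : Type*} [RCLike 𝕂]

section
-- Any submultiplicative norm gives summability in the (norm-independent) product topology.
attribute [local instance] Matrix.linftyOpNormedRing Matrix.linftyOpNormedAlgebra

lemma summable_phi_terms (A : Matrix n n 𝕂) :
    Summable fun k : ℕ => ((k + 1)! : 𝕂)⁻¹ • A ^ k :=
  _root_.summable_phi_terms A

end

lemma phi_mulVec_of_mulVec_eq_smul {A : Matrix n n 𝕂} {v : n → 𝕂} {μ : 𝕂}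
    (hv : A *ᵥ v = μ • v) : phi 𝕂 A *ᵥ v = phi 𝕂 μ • v := by
  have hpow (k : ℕ) : A ^ k *ᵥ v = μ ^ k • v := by
    induction k with
    | zero => simp
    | succ k ih => rw [pow_succ, ← mulVec_mulVec, hv, mulVec_smul, ih, smul_smul, pow_succ']
  have hcont : Continuous (mulVec.addMonoidHomLeft v : Matrix n n 𝕂 →+ n → 𝕂) :=
    continuous_id.matrix_mulVec continuous_const
  change mulVec.addMonoidHomLeft v (phi 𝕂 A) = _
  rw [phi, (summable_phi_terms A).map_tsum _ hcont, phi,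
    ← (_root_.summable_phi_terms μ).tsum_smul_const]
  congr! 1 with k
  simp [mulVec.addMonoidHomLeft, smul_mulVec, hpow, smul_smul]

end RCLike

lemma isUnit_phi_iff (A : Matrix n n ℂ) :
    IsUnit (phi ℂ A) ↔ ∀ μ ∈ spectrum ℂ A, phi ℂ μ ≠ 0 := by
  simp_rw [← spectrum_toLin', ← Module.End.hasEigenvalue_iff_mem_spectrum]
  constructor
  · rintro hunit μ hμ hzero
    obtain ⟨v, hv⟩ := hμ.exists_hasEigenvector
    have hAv : A *ᵥ v = μ • v := by simpa using hv.apply_eq_smul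
    refine hv.2 (mulVec_injective_iff_isUnit.mpr hunit ?_)
    rw [phi_mulVec_of_mulVec_eq_smul hAv, hzero, zero_smul, mulVec_zero]
  · intro h
    by_contra hunit
    have hker : LinearMap.ker (toLinAlgEquiv' (phi ℂ A)) ≠ ⊥ := by
      rwa [Ne, ← LinearMap.isUnit_iff_ker_eq_bot, isUnit_map_iff]
    obtain ⟨μ, v, hv, hzero⟩ := Module.End.exists_hasEigenvector_mem_ker_of_commute
      ((commute_phi (𝕂 := ℂ) A).map toLinAlgEquiv') hker
    have hAv : A *ᵥ v = μ • v := by simpa using hv.apply_eq_smul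
    have hphiv : phi ℂ A *ᵥ v = 0 := by simpa using hzero
    rw [phi_mulVec_of_mulVec_eq_smul hAv] at hphiv
    exact h μ (Module.End.hasEigenvalue_of_hasEigenvector hv)
      ((smul_eq_zero.mp hphiv).resolve_right hv.2)

lemma isUnit_phi_smul_iff (A : Matrix n n ℂ) (t : ℂ) :
    IsUnit (phi ℂ (t • A)) ↔ ∀ μ ∈ spectrum ℂ A, phi ℂ (t * μ) ≠ 0 := by
  rcases eq_or_ne t 0 with rfl | ht
  · simp
  · have hσ := spectrum.unit_smul_eq_smul A (Units.mk0 t ht)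
    rw [Units.smul_def, Units.val_mk0] at hσ
    rw [isUnit_phi_iff, hσ]
    simp only [Set.mem_smul_set, forall_exists_index, and_imp, forall_apply_eq_imp_iff₂,
      Units.smul_def, Units.val_mk0, smul_eq_mul]

lemma isUnit_phi_iff_isUnit_phi_map_ofReal (B : Matrix n n ℝ) :
    IsUnit (phi ℝ B) ↔ IsUnit (phi ℂ (B.map (algebraMap ℝ ℂ))) := by
  rw [← RingHom.mapMatrix_apply,
    ← map_phi ℝ ℂ _ (continuous_id.matrix_map Complex.continuous_ofReal) (summable_phi_terms B),
    isUnit_iff_isUnit_det, isUnit_iff_isUnit_det, ← RingHom.map_det,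
    isUnit_map_iff]

end Matrix

/-- `Φ(tS)` is invertible for all real `t` if and only if `S` has no nonzero purely
imaginary complex eigenvalue. -/
theorem stmt13 (d : ℕ) (S : Matrix (Fin d) (Fin d) ℝ) :
    (∀ t : ℝ, IsUnit (PhiMat (t • S))) ↔
      ∀ a : ℝ, a ≠ 0 → (a : ℂ) * Complex.I ∉ spectrum ℂ (S.map (algebraMap ℝ ℂ)) := by
  have hmap (t : ℝ) : (t • S).map (algebraMap ℝ ℂ) = (t : ℂ) • S.map (algebraMap ℝ ℂ) := by
    ext; simp
  calc (∀ t : ℝ, IsUnit (PhiMat (t • S)))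
      ↔ ∀ t : ℝ, ∀ μ ∈ spectrum ℂ (S.map (algebraMap ℝ ℂ)), phi ℂ (t * μ) ≠ 0 := by
        refine forall_congr' fun t => ?_
        rw [PhiMat, ← phi, Matrix.isUnit_phi_iff_isUnit_phi_map_ofReal, hmap,
          Matrix.isUnit_phi_smul_iff]
    _ ↔ _ := by
        constructor
        · intro h a ha hmem
          obtain ⟨t, ht⟩ := (exists_phi_ofReal_mul_eq_zero_iff _).mpr ⟨a, ha, rfl⟩
          exact h t _ hmem ht
        · intro h t μ hμ hzero
          obtain ⟨a, ha, rfl⟩ := (exists_phi_ofReal_mul_eq_zero_iff μ).mp ⟨t, hzero⟩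
          exact h a ha hμ
end
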